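/- arXiv:2407.10927 — 4 statements merged into one kernel-verified Lean document; each statement's English description precedes it below -/
import Mathlib

section
/- Fix n ≥ 1 and λ, μ, ν ∈ (ZMod 3)ⁿ with all entries in {0,1}. The map sending x to the pair ({e : x(e) = 2}, restriction of x to {e : x(e) ≠ 2}) is a well-defined bijection from the set of refined Knutson–Tao–Woodward tilings with boundary (λ, μ, ν) onto the set of Knutson–Tao–Woodward tilings with boundary (λ, μ, ν); in particular these two sets have the same cardinality. -/
/-!
Read the label `2` as the mid-edge of a rhombus. `Ω̄₀` consists of `(0,0,0)`, `(1,1,1)` and the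
three cyclic rotations of `(2,1,0)`, so a triangle labelling lies in `Ω̄₀` exactly when the triangle
has at most one mid-edge, carries a constant label if it has none, and otherwise carries on its two
other edges the labels that the Knutson–Tao–Woodward rhombus prescribes on that side of its
mid-edge. A rhombus condition is the conjunction of these conditions on its two triangles, and no
boundary edge can be labelled `2` because `λ`, `μ`, `ν` take values in `{0, 1}`. Hence cutting at
`2` maps refined tilings to tilings, and labelling the edges of `M` by `2` inverts it.
-/

namespace KTWPuzzle

/-- Edges of the size-`n` puzzle triangle: a family index (`0 = L`, `1 = R`,
`2 = H`) together with indices `(r, c)` satisfying `1 ≤ c ≤ r ≤ n`. -/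
def Edge (n : ℕ) : Type :=
  {p : Fin 3 × ℕ × ℕ // 1 ≤ p.2.2 ∧ p.2.2 ≤ p.2.1 ∧ p.2.1 ≤ n}

/-- The edge `L(r,c)`. -/
def eL (n r c : ℕ) (h : 1 ≤ c ∧ c ≤ r ∧ r ≤ n) : Edge n := ⟨(0, r, c), h⟩

/-- The edge `R(r,c)`. -/
def eR (n r c : ℕ) (h : 1 ≤ c ∧ c ≤ r ∧ r ≤ n) : Edge n := ⟨(1, r, c), h⟩

/-- The edge `H(r,c)`. -/
def eH (n r c : ℕ) (h : 1 ≤ c ∧ c ≤ r ∧ r ≤ n) : Edge n := ⟨(2, r, c), h⟩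

/-- The boundary edges: `L(r,1)` (left side), `R(r,r)` (right side) and
`H(n,c)` (bottom side); all other edges are interior. -/
def boundary (n : ℕ) : Set (Edge n) :=
  {e | (e.1.1 = 0 ∧ e.1.2.2 = 1) ∨ (e.1.1 = 1 ∧ e.1.2.2 = e.1.2.1) ∨
       (e.1.1 = 2 ∧ e.1.2.1 = n)}

/-- The atomic refinement `Ω̄₀` of the Knutson–Tao–Woodward puzzle pieces:
each unit triangle's edge values read clockwise starting from its left edge. -/
def Omega0 : Set (ZMod 3 × ZMod 3 × ZMod 3) :=
  {(0, 0, 0), (1, 1, 1), (1, 0, 2), (0, 2, 1), (2, 1, 0)}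

/-- Refined Knutson–Tao–Woodward tilings with boundary `(λ, μ, ν)`:
`ZMod 3`-valued edge labellings matching the boundary and whose every unit
triangle, read clockwise from its left edge, lies in `Ω̄₀`. -/
def RefinedTiling (n : ℕ) (lam mu nu : Fin n → ZMod 3) : Set (Edge n → ZMod 3) :=
  {x |
    (∀ r, ∀ h : 1 ≤ r ∧ r ≤ n, x (eL n r 1 (by omega)) = lam ⟨r - 1, by omega⟩) ∧
    (∀ r, ∀ h : 1 ≤ r ∧ r ≤ n, x (eR n r r (by omega)) = mu ⟨r - 1, by omega⟩) ∧
    (∀ c, ∀ h : 1 ≤ c ∧ c ≤ n, x (eH n n c (by omega)) = nu ⟨c - 1, by omega⟩) ∧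
    (∀ r c, ∀ h : 1 ≤ c ∧ c ≤ r ∧ r ≤ n,
      (x (eL n r c h), x (eR n r c h), x (eH n r c h)) ∈ Omega0) ∧
    (∀ r c, ∀ h : 1 ≤ c ∧ c + 1 ≤ r ∧ r ≤ n,
      (x (eR n r c (by omega)), x (eH n (r - 1) c (by omega)),
        x (eL n r (c + 1) (by omega))) ∈ Omega0)}

/-- A labelling of the edges outside a set `M` by values in `ZMod 3`. -/
def Labelling (n : ℕ) (M : Set (Edge n)) : Type :=
  ∀ e : Edge n, e ∉ M → ZMod 3

/-- Knutson–Tao–Woodward tilings with boundary `(λ, μ, ν)`: pairs `(M, y)`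
where `M` is a set of interior edges (the mid-edges of the rhombus pieces) and
`y` assigns to every edge not in `M` a value in `{0, 1} ⊆ ZMod 3`, matching the
boundary, such that every unit triangle has at most one edge in `M`, every
unit triangle with no edge in `M` has all three edge values equal, and every
edge of `M` sits inside the unique Knutson–Tao–Woodward rhombus labelling. -/
def KTWTiling (n : ℕ) (lam mu nu : Fin n → ZMod 3) :
    Set ((M : Set (Edge n)) × Labelling n M) :=
  {p |
    -- `M` is a set of interior edges
    (∀ e ∈ p.1, e ∉ boundary n) ∧
    -- the values of `y` lie in `{0, 1}`
    (∀ e, ∀ h : e ∉ p.1, p.2 e h = 0 ∨ p.2 e h = 1) ∧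
    -- boundary values match `λ`, `μ`, `ν`
    (∀ r, ∀ h : 1 ≤ r ∧ r ≤ n, ∀ hm : eL n r 1 (by omega) ∉ p.1,
      p.2 (eL n r 1 (by omega)) hm = lam ⟨r - 1, by omega⟩) ∧
    (∀ r, ∀ h : 1 ≤ r ∧ r ≤ n, ∀ hm : eR n r r (by omega) ∉ p.1,
      p.2 (eR n r r (by omega)) hm = mu ⟨r - 1, by omega⟩) ∧
    (∀ c, ∀ h : 1 ≤ c ∧ c ≤ n, ∀ hm : eH n n c (by omega) ∉ p.1,
      p.2 (eH n n c (by omega)) hm = nu ⟨c - 1, by omega⟩) ∧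
    -- every upward unit triangle has at most one edge in `M`
    (∀ r c, ∀ h : 1 ≤ c ∧ c ≤ r ∧ r ≤ n,
      ¬(eL n r c h ∈ p.1 ∧ eR n r c h ∈ p.1) ∧
      ¬(eL n r c h ∈ p.1 ∧ eH n r c h ∈ p.1) ∧
      ¬(eR n r c h ∈ p.1 ∧ eH n r c h ∈ p.1)) ∧
    -- every downward unit triangle has at most one edge in `M`
    (∀ r c, ∀ h : 1 ≤ c ∧ c + 1 ≤ r ∧ r ≤ n,
      ¬(eR n r c (by omega) ∈ p.1 ∧ eH n (r - 1) c (by omega) ∈ p.1) ∧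
      ¬(eR n r c (by omega) ∈ p.1 ∧ eL n r (c + 1) (by omega) ∈ p.1) ∧
      ¬(eH n (r - 1) c (by omega) ∈ p.1 ∧ eL n r (c + 1) (by omega) ∈ p.1)) ∧
    -- upward unit triangles with no edge in `M` have all edge values equal
    (∀ r c, ∀ h : 1 ≤ c ∧ c ≤ r ∧ r ≤ n,
      ∀ h1 : eL n r c h ∉ p.1, ∀ h2 : eR n r c h ∉ p.1, ∀ h3 : eH n r c h ∉ p.1,
        p.2 (eL n r c h) h1 = p.2 (eR n r c h) h2 ∧
        p.2 (eR n r c h) h2 = p.2 (eH n r c h) h3) ∧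
    -- downward unit triangles with no edge in `M` have all edge values equal
    (∀ r c, ∀ h : 1 ≤ c ∧ c + 1 ≤ r ∧ r ≤ n,
      ∀ h1 : eR n r c (by omega) ∉ p.1, ∀ h2 : eH n (r - 1) c (by omega) ∉ p.1,
      ∀ h3 : eL n r (c + 1) (by omega) ∉ p.1,
        p.2 (eR n r c (by omega)) h1 = p.2 (eH n (r - 1) c (by omega)) h2 ∧
        p.2 (eH n (r - 1) c (by omega)) h2 = p.2 (eL n r (c + 1) (by omega)) h3) ∧
    -- rhombus with horizontal mid-edge `H(r,c)`
    (∀ r c, ∀ h : 1 ≤ c ∧ c ≤ r ∧ r + 1 ≤ n, eH n r c (by omega) ∈ p.1 →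
      (∀ h1 : eL n r c (by omega) ∉ p.1, p.2 (eL n r c (by omega)) h1 = 1) ∧
      (∀ h2 : eL n (r + 1) (c + 1) (by omega) ∉ p.1,
        p.2 (eL n (r + 1) (c + 1) (by omega)) h2 = 1) ∧
      (∀ h3 : eR n r c (by omega) ∉ p.1, p.2 (eR n r c (by omega)) h3 = 0) ∧
      (∀ h4 : eR n (r + 1) c (by omega) ∉ p.1,
        p.2 (eR n (r + 1) c (by omega)) h4 = 0)) ∧
    -- rhombus with mid-edge `L(r,c+1)`
    (∀ r c, ∀ h : 1 ≤ c ∧ c + 1 ≤ r ∧ r ≤ n, eL n r (c + 1) (by omega) ∈ p.1 →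
      (∀ h1 : eR n r c (by omega) ∉ p.1, p.2 (eR n r c (by omega)) h1 = 1) ∧
      (∀ h2 : eR n r (c + 1) (by omega) ∉ p.1,
        p.2 (eR n r (c + 1) (by omega)) h2 = 1) ∧
      (∀ h3 : eH n (r - 1) c (by omega) ∉ p.1,
        p.2 (eH n (r - 1) c (by omega)) h3 = 0) ∧
      (∀ h4 : eH n r (c + 1) (by omega) ∉ p.1,
        p.2 (eH n r (c + 1) (by omega)) h4 = 0)) ∧
    -- rhombus with mid-edge `R(r,c)`
    (∀ r c, ∀ h : 1 ≤ c ∧ c + 1 ≤ r ∧ r ≤ n, eR n r c (by omega) ∈ p.1 →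
      (∀ h1 : eL n r c (by omega) ∉ p.1, p.2 (eL n r c (by omega)) h1 = 0) ∧
      (∀ h2 : eL n r (c + 1) (by omega) ∉ p.1,
        p.2 (eL n r (c + 1) (by omega)) h2 = 0) ∧
      (∀ h3 : eH n (r - 1) c (by omega) ∉ p.1,
        p.2 (eH n (r - 1) c (by omega)) h3 = 1) ∧
      (∀ h4 : eH n r c (by omega) ∉ p.1, p.2 (eH n r c (by omega)) h4 = 1))}

structure IsKTWTriangle (a b c : ZMod 3) : Prop where
  of_fst_eq_two : a = 2 → b = 1 ∧ c = 0
  of_snd_eq_two : b = 2 → c = 1 ∧ a = 0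
  of_thd_eq_two : c = 2 → a = 1 ∧ b = 0
  eq_of_ne_two : a ≠ 2 → b ≠ 2 → c ≠ 2 → a = b ∧ b = c

theorem eq_zero_or_eq_one_of_ne_two {a : ZMod 3} : a ≠ 2 → a = 0 ∨ a = 1 := by
  revert a
  decide

theorem ne_two_of_eq_zero_or_eq_one {a : ZMod 3} : a = 0 ∨ a = 1 → a ≠ 2 := by
  revert a
  decide

theorem IsKTWTriangle.atMostOne_eq_two {a b c : ZMod 3} (h : IsKTWTriangle a b c) :
    ¬(a = 2 ∧ b = 2) ∧ ¬(a = 2 ∧ c = 2) ∧ ¬(b = 2 ∧ c = 2) := by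
  refine ⟨fun ⟨ha, hb⟩ => ?_, fun ⟨ha, hc⟩ => ?_, fun ⟨hb, hc⟩ => ?_⟩
  · exact absurd ((h.of_fst_eq_two ha).1.symm.trans hb) (by decide)
  · exact absurd ((h.of_fst_eq_two ha).2.symm.trans hc) (by decide)
  · exact absurd ((h.of_snd_eq_two hb).1.symm.trans hc) (by decide)

theorem mem_Omega0_iff_isKTWTriangle (a b c : ZMod 3) :
    (a, b, c) ∈ Omega0 ↔ IsKTWTriangle a b c := by
  simp only [Omega0, Set.mem_insert_iff, Set.mem_singleton_iff, Prod.mk.injEq]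
  constructor
  · rintro (⟨rfl, rfl, rfl⟩ | ⟨rfl, rfl, rfl⟩ | ⟨rfl, rfl, rfl⟩ | ⟨rfl, rfl, rfl⟩ | ⟨rfl, rfl, rfl⟩) <;>
      exact ⟨by decide, by decide, by decide, by decide⟩
  · intro h
    by_cases ha : a = 2
    · obtain ⟨rfl, rfl⟩ := h.of_fst_eq_two ha
      simp [ha]
    by_cases hb : b = 2
    · obtain ⟨rfl, rfl⟩ := h.of_snd_eq_two hb
      simp [hb]
    by_cases hc : c = 2
    · obtain ⟨rfl, rfl⟩ := h.of_thd_eq_two hc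
      simp [hc]
    obtain ⟨rfl, rfl⟩ := h.eq_of_ne_two ha hb hc
    rcases eq_zero_or_eq_one_of_ne_two ha with rfl | rfl <;> simp

def splitAtTwo {n : ℕ} (x : Edge n → ZMod 3) : (M : Set (Edge n)) × Labelling n M :=
  ⟨{e | x e = 2}, fun e _ => x e⟩

open Classical in
noncomputable def extendByTwo {n : ℕ} (p : (M : Set (Edge n)) × Labelling n M) :
    Edge n → ZMod 3 :=
  fun e => if h : e ∈ p.1 then 2 else p.2 e h

theorem extendByTwo_splitAtTwo {n : ℕ} (x : Edge n → ZMod 3) :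
    extendByTwo (splitAtTwo x) = x := by
  funext e
  by_cases he : x e = 2 <;> simp [extendByTwo, splitAtTwo, he]

theorem splitAtTwo_injective (n : ℕ) : Function.Injective (splitAtTwo (n := n)) :=
  Function.LeftInverse.injective extendByTwo_splitAtTwo

theorem sigma_labelling_ext {n : ℕ} {p q : (M : Set (Edge n)) × Labelling n M}
    (h₁ : p.1 = q.1) (h₂ : ∀ e h h', p.2 e h = q.2 e h') : p = q := by
  obtain ⟨M, y⟩ := p
  obtain ⟨M', y'⟩ := q
  obtain rfl : M = M' := h₁
  congr
  funext e h
  exact h₂ e h h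

theorem splitAtTwo_extendByTwo {n : ℕ} (p : (M : Set (Edge n)) × Labelling n M)
    (hp : ∀ e h, p.2 e h ≠ 2) : splitAtTwo (extendByTwo p) = p := by
  refine sigma_labelling_ext ?_ fun e _ h' => ?_
  · ext e
    by_cases he : e ∈ p.1 <;> simp [splitAtTwo, extendByTwo, he, hp]
  · simp [splitAtTwo, extendByTwo, h']

section Tilings

variable {n : ℕ} {lam mu nu : Fin n → ZMod 3} {x : Edge n → ZMod 3}

theorem ne_two_of_mem_boundary (hlam : ∀ i, lam i = 0 ∨ lam i = 1)
    (hmu : ∀ i, mu i = 0 ∨ mu i = 1) (hnu : ∀ i, nu i = 0 ∨ nu i = 1)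
    (hx : x ∈ RefinedTiling n lam mu nu) {e : Edge n} (he : e ∈ boundary n) : x e ≠ 2 := by
  obtain ⟨⟨f, r, c⟩, hrc⟩ := e
  obtain ⟨hL, hR, hH, -, -⟩ := hx
  rcases he with ⟨rfl, rfl : c = 1⟩ | ⟨rfl, rfl : c = r⟩ | ⟨rfl, rfl : r = n⟩
  · exact (hL r ⟨hrc.2.1, hrc.2.2⟩).symm ▸ ne_two_of_eq_zero_or_eq_one (hlam _)
  · exact (hR c ⟨hrc.1, hrc.2.2⟩).symm ▸ ne_two_of_eq_zero_or_eq_one (hmu _)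
  · exact (hH c ⟨hrc.1, hrc.2.1⟩).symm ▸ ne_two_of_eq_zero_or_eq_one (hnu _)

theorem splitAtTwo_mem_ktwTiling (hlam : ∀ i, lam i = 0 ∨ lam i = 1)
    (hmu : ∀ i, mu i = 0 ∨ mu i = 1) (hnu : ∀ i, nu i = 0 ∨ nu i = 1)
    (hx : x ∈ RefinedTiling n lam mu nu) : splitAtTwo x ∈ KTWTiling n lam mu nu := by
  have hInt : ∀ e, x e = 2 → e ∉ boundary n :=
    fun e h2 he => ne_two_of_mem_boundary hlam hmu hnu hx he h2
  obtain ⟨hL, hR, hH, hUp, hDn⟩ := hx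
  simp only [mem_Omega0_iff_isKTWTriangle] at hUp hDn
  simp only [KTWTiling, splitAtTwo, Set.mem_ofPred_eq]
  refine ⟨hInt, fun e => eq_zero_or_eq_one_of_ne_two, fun r h _ => hL r h, fun r h _ => hR r h,
    fun c h _ => hH c h, fun r c h => (hUp r c h).atMostOne_eq_two,
    fun r c h => (hDn r c h).atMostOne_eq_two, fun r c h => (hUp r c h).eq_of_ne_two,
    fun r c h => (hDn r c h).eq_of_ne_two, fun r c h h2 => ?_, fun r c h h2 => ?_,
    fun r c h h2 => ?_⟩
  · have up := (hUp r c ⟨h.1, h.2.1, by omega⟩).of_thd_eq_two h2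
    have down := (hDn (r + 1) c ⟨h.1, by omega, h.2.2⟩).of_snd_eq_two h2
    exact ⟨fun _ => up.1, fun _ => down.1, fun _ => up.2, fun _ => down.2⟩
  · have down := (hDn r c h).of_thd_eq_two h2
    have up := (hUp r (c + 1) ⟨by omega, h.2.1, h.2.2⟩).of_fst_eq_two h2
    exact ⟨fun _ => down.1, fun _ => up.1, fun _ => down.2, fun _ => up.2⟩
  · have up := (hUp r c ⟨h.1, by omega, h.2.2⟩).of_snd_eq_two h2
    have down := (hDn r c h).of_fst_eq_two h2
    exact ⟨fun _ => up.2, fun _ => down.2, fun _ => down.1, fun _ => up.1⟩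

theorem isKTWTriangle_up_of_splitAtTwo_mem (hx : splitAtTwo x ∈ KTWTiling n lam mu nu)
    (r c : ℕ) (h : 1 ≤ c ∧ c ≤ r ∧ r ≤ n) :
    IsKTWTriangle (x (eL n r c h)) (x (eR n r c h)) (x (eH n r c h)) := by
  simp only [KTWTiling, splitAtTwo, Set.mem_ofPred_eq] at hx
  obtain ⟨hInt, -, -, -, -, hUp1, -, hUpE, -, hRhH, hRhL, hRhR⟩ := hx
  obtain ⟨hLR, hLH, hRH⟩ := hUp1 r c h
  refine ⟨fun hL2 => ?_, fun hR2 => ?_, fun hH2 => ?_, hUpE r c h⟩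
  · have hc : c ≠ 1 := fun hc => hInt _ hL2 (Or.inl ⟨rfl, hc⟩)
    obtain ⟨c, rfl⟩ : ∃ c', c = c' + 1 := ⟨c - 1, by omega⟩
    have rh := hRhL r c ⟨by omega, by omega, h.2.2⟩ hL2
    exact ⟨rh.2.1 fun hR2 => hLR ⟨hL2, hR2⟩, rh.2.2.2 fun hH2 => hLH ⟨hL2, hH2⟩⟩
  · have hc : c ≠ r := fun hc => hInt _ hR2 (Or.inr (Or.inl ⟨rfl, hc⟩))
    have rh := hRhR r c ⟨h.1, by omega, h.2.2⟩ hR2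
    exact ⟨rh.2.2.2 fun hH2 => hRH ⟨hR2, hH2⟩, rh.1 fun hL2 => hLR ⟨hL2, hR2⟩⟩
  · have hr : r ≠ n := fun hr => hInt _ hH2 (Or.inr (Or.inr ⟨rfl, hr⟩))
    have rh := hRhH r c ⟨h.1, h.2.1, by omega⟩ hH2
    exact ⟨rh.1 fun hL2 => hLH ⟨hL2, hH2⟩, rh.2.2.1 fun hR2 => hRH ⟨hR2, hH2⟩⟩

theorem isKTWTriangle_down_of_splitAtTwo_mem (hx : splitAtTwo x ∈ KTWTiling n lam mu nu)
    (r c : ℕ) (h : 1 ≤ c ∧ c + 1 ≤ r ∧ r ≤ n) :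
    IsKTWTriangle (x (eR n r c (by omega))) (x (eH n (r - 1) c (by omega)))
      (x (eL n r (c + 1) (by omega))) := by
  simp only [KTWTiling, splitAtTwo, Set.mem_ofPred_eq] at hx
  obtain ⟨-, -, -, -, -, -, hDn1, -, hDnE, hRhH, hRhL, hRhR⟩ := hx
  obtain ⟨hRH, hRL, hHL⟩ := hDn1 r c h
  refine ⟨fun hR2 => ?_, fun hH2 => ?_, fun hL2 => ?_, hDnE r c h⟩
  · have rh := hRhR r c h hR2
    exact ⟨rh.2.2.1 fun hH2 => hRH ⟨hR2, hH2⟩, rh.2.1 fun hL2 => hRL ⟨hR2, hL2⟩⟩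
  · obtain ⟨r, rfl⟩ : ∃ r', r = r' + 1 := ⟨r - 1, by omega⟩
    have rh := hRhH r c ⟨h.1, by omega, h.2.2⟩ hH2
    exact ⟨rh.2.1 fun hL2 => hHL ⟨hH2, hL2⟩, rh.2.2.2 fun hR2 => hRH ⟨hR2, hH2⟩⟩
  · have rh := hRhL r c h hL2
    exact ⟨rh.1 fun hR2 => hRL ⟨hR2, hL2⟩, rh.2.2.1 fun hH2 => hHL ⟨hH2, hL2⟩⟩

theorem mem_refinedTiling_of_splitAtTwo_mem (hx : splitAtTwo x ∈ KTWTiling n lam mu nu) :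
    x ∈ RefinedTiling n lam mu nu := by
  have up := isKTWTriangle_up_of_splitAtTwo_mem hx
  have down := isKTWTriangle_down_of_splitAtTwo_mem hx
  simp only [KTWTiling, splitAtTwo, Set.mem_ofPred_eq] at hx
  obtain ⟨hInt, -, hL, hR, hH, -⟩ := hx
  simp only [RefinedTiling, Set.mem_ofPred_eq, mem_Omega0_iff_isKTWTriangle]
  exact ⟨fun r h => hL r h fun h2 => hInt _ h2 (Or.inl ⟨rfl, rfl⟩),
    fun r h => hR r h fun h2 => hInt _ h2 (Or.inr (Or.inl ⟨rfl, rfl⟩)),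
    fun c h => hH c h fun h2 => hInt _ h2 (Or.inr (Or.inr ⟨rfl, rfl⟩)), up, down⟩

end Tilings

theorem refinedTiling_bijOn_ktwTiling_general
    (n : ℕ) (lam mu nu : Fin n → ZMod 3)
    (hlam : ∀ i, lam i = 0 ∨ lam i = 1)
    (hmu : ∀ i, mu i = 0 ∨ mu i = 1)
    (hnu : ∀ i, nu i = 0 ∨ nu i = 1) :
    Set.BijOn
      (fun x : Edge n → ZMod 3 =>
        (⟨{e | x e = 2}, fun e _ => x e⟩ : (M : Set (Edge n)) × Labelling n M))
      (RefinedTiling n lam mu nu) (KTWTiling n lam mu nu) ∧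
    Nat.card ↥(RefinedTiling n lam mu nu) = Nat.card ↥(KTWTiling n lam mu nu) := by
  have hbij : Set.BijOn splitAtTwo (RefinedTiling n lam mu nu) (KTWTiling n lam mu nu) := by
    refine ⟨fun x hx => splitAtTwo_mem_ktwTiling hlam hmu hnu hx,
      (splitAtTwo_injective n).injOn, fun p hp => ?_⟩
    have hsplit := splitAtTwo_extendByTwo p fun e h => ne_two_of_eq_zero_or_eq_one (hp.2.1 e h)
    exact ⟨extendByTwo p, mem_refinedTiling_of_splitAtTwo_mem (by rwa [hsplit]), hsplit⟩
  exact ⟨hbij, Nat.card_congr (hbij.equiv _)⟩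

/-- for `n ≥ 1` and `λ, μ, ν ∈ (ZMod 3)ⁿ` with all entries in
`{0, 1}`, the map sending a refined tiling `x` to the pair
`({e | x e = 2}, restriction of x to {e | x e ≠ 2})` is a bijection from the
set of refined Knutson–Tao–Woodward tilings with boundary `(λ, μ, ν)` onto the
set of Knutson–Tao–Woodward tilings with boundary `(λ, μ, ν)`; in particular
the two sets have the same cardinality. -/
theorem refinedTiling_bijOn_ktwTiling
    (n : ℕ) (hn : 1 ≤ n) (lam mu nu : Fin n → ZMod 3)
    (hlam : ∀ i, lam i = 0 ∨ lam i = 1)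
    (hmu : ∀ i, mu i = 0 ∨ mu i = 1)
    (hnu : ∀ i, nu i = 0 ∨ nu i = 1) :
    Set.BijOn
      (fun x : Edge n → ZMod 3 =>
        (⟨{e | x e = 2}, fun e _ => x e⟩ : (M : Set (Edge n)) × Labelling n M))
      (RefinedTiling n lam mu nu) (KTWTiling n lam mu nu) ∧
    Nat.card ↥(RefinedTiling n lam mu nu) = Nat.card ↥(KTWTiling n lam mu nu) :=
  refinedTiling_bijOn_ktwTiling_general n lam mu nu hlam hmu hnu

end KTWPuzzle
end

section
/- Let n be a natural number and let P be a prime ideal of the polynomial ring MvPolynomial (Fin n) (ZMod 3) such that X_i² − X_i ∈ P for every i. Then there exists a point a : Fin n → ZMod 3 with a(i) ∈ {0,1} for every i such that P is the ideal generated by the polynomials X_i − a(i) for i = 1, …, n. -/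
/-!
Each `Xᵢ² - Xᵢ = Xᵢ (Xᵢ - 1)` lies in the prime `P`, so `P` contains `Xᵢ - aᵢ` for some
`aᵢ ∈ {0, 1}`. The ideal generated by the `Xᵢ - aᵢ` is the kernel of evaluation at `a`, a
surjection onto a field, hence maximal; as `P` is proper and contains it, the two are equal.
-/

open MvPolynomial

theorem Ideal.IsPrime.mem_or_sub_one_mem_of_sq_sub_self_mem {A : Type*} [CommRing A]
    {P : Ideal A} (hP : P.IsPrime) {x : A} (hx : x ^ 2 - x ∈ P) : x ∈ P ∨ x - 1 ∈ P :=
  hP.mem_or_mem (by rwa [mul_sub_one, ← sq])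

namespace MvPolynomial

variable {σ R : Type*} [CommRing R]

theorem sub_C_eval_mem_span_X_sub_C (a : σ → R) (p : MvPolynomial σ R) :
    p - C (eval a p) ∈ Ideal.span (Set.range fun i => X i - C (a i)) := by
  set I := Ideal.span (Set.range fun i => (X i : MvPolynomial σ R) - C (a i))
  induction p using MvPolynomial.induction_on with
  | C r => simp
  | add p q hp hq =>
    convert I.add_mem hp hq using 1
    simp only [map_add]
    ring
  | mul_X p i hp =>
    have hXi : X i - C (a i) ∈ I := Ideal.subset_span ⟨i, rfl⟩
    convert I.add_mem (I.mul_mem_left p hXi) (I.mul_mem_left (C (a i)) hp) using 1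
    simp only [map_mul, eval_X]
    ring

theorem ker_eval_eq_span_X_sub_C (a : σ → R) :
    RingHom.ker (eval a) = Ideal.span (Set.range fun i => X i - C (a i)) := by
  refine le_antisymm (fun p hp => ?_) (Ideal.span_le.mpr ?_)
  · simpa [RingHom.mem_ker.mp hp] using sub_C_eval_mem_span_X_sub_C a p
  · rintro _ ⟨i, rfl⟩
    simp

theorem isMaximal_span_X_sub_C {K : Type*} [Field K] (a : σ → K) :
    (Ideal.span (Set.range fun i => X i - C (a i)) : Ideal (MvPolynomial σ K)).IsMaximal := by
  rw [← ker_eval_eq_span_X_sub_C]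
  exact RingHom.ker_isMaximal_of_surjective _ fun z => ⟨C z, eval_C z⟩

end MvPolynomial

/-- every prime ideal of `MvPolynomial (Fin n) (ZMod 3)`
containing the polynomials `Xᵢ² − Xᵢ` is the vanishing ideal
`⟨X₁ − a₁, …, Xₙ − aₙ⟩` of a single point `a` with `{0,1}`-valued entries. -/
theorem prime_of_sq_sub_self_mem_eq_span_point
    (n : ℕ) (P : Ideal (MvPolynomial (Fin n) (ZMod 3))) (hP : P.IsPrime)
    (h : ∀ i : Fin n, MvPolynomial.X i ^ 2 - MvPolynomial.X i ∈ P) :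
    ∃ a : Fin n → ZMod 3, (∀ i, a i = 0 ∨ a i = 1) ∧
      P = Ideal.span (Set.range fun i => MvPolynomial.X i - MvPolynomial.C (a i)) := by
  have hpoint : ∀ i, ∃ c : ZMod 3, (c = 0 ∨ c = 1) ∧ X i - C c ∈ P := fun i => by
    rcases hP.mem_or_sub_one_mem_of_sq_sub_self_mem (h i) with h0 | h1
    · exact ⟨0, .inl rfl, by simpa using h0⟩
    · exact ⟨1, .inr rfl, by simpa using h1⟩
  choose a ha haP using hpoint
  have hle : Ideal.span (Set.range fun i => X i - C (a i)) ≤ P :=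
    Ideal.span_le.mpr (Set.range_subset_iff.mpr haP)
  exact ⟨a, ha, ((isMaximal_span_X_sub_C a).eq_of_le hP.ne_top hle).symm⟩
end

section
/- Let n be a natural number and let I be an ideal of MvPolynomial (Fin n) (ZMod 3) such that X_i² − X_i ∈ I for every i. Then I equals the intersection, taken over all points a : Fin n → ZMod 3 with a(i) ∈ {0,1} for every i at which every polynomial of I evaluates to 0, of the ideals generated by {X_1 − a(1), …, X_n − a(n)} (the intersection over the empty family being the whole ring). -/
/-!
Write `J` for the ideal generated by the `Xᵢ² − Xᵢ`. For a boolean point `b`, the product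
`e_b = ∏ᵢ (Xᵢ or 1 − Xᵢ)` satisfies `e_b · (Xᵢ − bᵢ) ∈ J`, hence `e_b · 𝔪_b ⊆ J` for the maximal
ideal `𝔪_b` of `b`, and the `e_b` sum to `1`. So a polynomial `p` lies in `I` as soon as every
`e_b · p` does. If `b` lies on the variety of `I` and `p ∈ 𝔪_b`, then `e_b · p ∈ J ⊆ I`; otherwise
some `q ∈ I` has `q(b) ≠ 0`, and `e_b · q ≡ q(b) · e_b` modulo `J` puts `e_b` itself in `I`.
-/

open MvPolynomial

namespace MvPolynomial

variable {σ R : Type*} [CommRing R]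

def boolPoint (b : σ → Bool) : σ → R := fun i => if b i then 1 else 0

theorem boolPoint_eq_zero_or_eq_one (b : σ → Bool) (i : σ) :
    boolPoint (R := R) b i = 0 ∨ boolPoint (R := R) b i = 1 := by
  cases h : b i <;> simp [boolPoint, h]

variable [Fintype σ]

/-- Takes the value `1` at `boolPoint b` and `0` at every other boolean point. -/
noncomputable def boolIndicator (b : σ → Bool) : MvPolynomial σ R :=
  ∏ i, if b i then X i else 1 - X i

theorem sum_boolIndicator [DecidableEq σ] : ∑ b : σ → Bool, boolIndicator (R := R) b = 1 := by
  simp only [boolIndicator]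
  rw [← Fintype.prod_sum (fun i (c : Bool) => if c then (X i : MvPolynomial σ R) else 1 - X i)]
  simp

theorem boolIndicator_mul_X_sub_C_mem {I : Ideal (MvPolynomial σ R)}
    (hI : ∀ i, X i ^ 2 - X i ∈ I) (b : σ → Bool) (i : σ) :
    boolIndicator b * (X i - C (boolPoint b i)) ∈ I := by
  classical
  rw [boolIndicator, ← Finset.mul_prod_erase _ _ (Finset.mem_univ i), mul_right_comm]
  apply I.mul_mem_right
  cases h : b i
  · simpa [boolPoint, h, sq, sub_mul, mul_sub] using I.neg_mem (hI i)
  · simpa [boolPoint, h, sq, mul_sub] using hI i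

theorem boolIndicator_mul_mem_of_eval_eq_zero {I : Ideal (MvPolynomial σ R)}
    (hI : ∀ i, X i ^ 2 - X i ∈ I) {b : σ → Bool} {p : MvPolynomial σ R}
    (hp : eval (boolPoint b) p = 0) : boolIndicator b * p ∈ I := by
  rw [← RingHom.mem_ker, ker_eval_eq_span_X_sub_C, Ideal.mem_span_range_iff_exists_fun] at hp
  obtain ⟨c, rfl⟩ := hp
  rw [Finset.mul_sum]
  exact I.sum_mem fun i _ => by
    rw [mul_left_comm]
    exact I.mul_mem_left _ (boolIndicator_mul_X_sub_C_mem hI b i)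

theorem mem_of_forall_boolIndicator_mul_mem {I : Ideal (MvPolynomial σ R)} {p : MvPolynomial σ R}
    (h : ∀ b, boolIndicator b * p ∈ I) : p ∈ I := by
  classical
  rw [← one_mul p, ← sum_boolIndicator, Finset.sum_mul]
  exact I.sum_mem fun b _ => h b

theorem boolIndicator_mem_of_eval_ne_zero {K : Type*} [Field K] {I : Ideal (MvPolynomial σ K)}
    (hI : ∀ i, X i ^ 2 - X i ∈ I) {b : σ → Bool} {q : MvPolynomial σ K} (hq : q ∈ I)
    (hq₀ : eval (boolPoint b) q ≠ 0) : boolIndicator b ∈ I := by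
  set c := eval (boolPoint b) q
  have hc : C c * boolIndicator b ∈ I := by
    have key : C c * boolIndicator b = boolIndicator b * q - boolIndicator b * (q - C c) := by
      ring
    rw [key]
    refine I.sub_mem (I.mul_mem_left _ hq) (boolIndicator_mul_mem_of_eval_eq_zero hI ?_)
    simp [c]
  simpa [← mul_assoc, ← map_mul, inv_mul_cancel₀ hq₀] using I.mul_mem_left (C c⁻¹) hc

end MvPolynomial

/-- an ideal of `MvPolynomial (Fin n) (ZMod 3)` containing the
polynomials `Xᵢ² − Xᵢ` equals the intersection, over the `{0,1}`-valued points
`a` of its variety, of the maximal ideals `⟨X₁ − a₁, …, Xₙ − aₙ⟩` (the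
intersection over the empty family being the whole ring). -/
theorem eq_iInf_span_points_of_sq_sub_self_mem
    (n : ℕ) (I : Ideal (MvPolynomial (Fin n) (ZMod 3)))
    (hI : ∀ i : Fin n, MvPolynomial.X i ^ 2 - MvPolynomial.X i ∈ I) :
    I = ⨅ (a : Fin n → ZMod 3)
          (_ : (∀ i, a i = 0 ∨ a i = 1) ∧ ∀ p ∈ I, MvPolynomial.eval a p = 0),
          Ideal.span (Set.range fun i => MvPolynomial.X i - MvPolynomial.C (a i)) := by
  simp_rw [← ker_eval_eq_span_X_sub_C]
  refine le_antisymm (le_iInf₂ fun a ha p hp => ha.2 p hp) fun p hp => ?_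
  refine mem_of_forall_boolIndicator_mul_mem fun b => ?_
  by_cases hb : ∀ q ∈ I, eval (boolPoint b) q = 0
  · have hpb : p ∈ RingHom.ker (eval (boolPoint b)) :=
      Ideal.mem_iInf.1 (Ideal.mem_iInf.1 hp _) ⟨boolPoint_eq_zero_or_eq_one b, hb⟩
    exact boolIndicator_mul_mem_of_eval_eq_zero hI hpb
  · push Not at hb
    obtain ⟨q, hq, hq₀⟩ := hb
    exact I.mul_mem_right _ (boolIndicator_mem_of_eval_ne_zero hI hq hq₀)
end

section
/- Let σ be a type, s a subset of σ, G a set of polynomials in MvPolynomial σ (ZMod 3), and a : σ → ZMod 3 a function with a(j) ∈ {0,1} for every j ∈ s. Then the ideal generated by G ∪ {X_j³ − X_j : j ∈ s} ∪ {X_j − a(j) : j ∈ s} equals the sum of the ideal generated by G ∪ {X_j² − X_j : j ∈ s} and the ideal generated by {X_j − a(j) : j ∈ s}. -/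
open MvPolynomial

section FieldEquations

variable {R ι : Type*} [CommRing R]

theorem pow_three_sub_self_eq_mul (x : R) : x ^ 3 - x = (x + 1) * (x ^ 2 - x) := by
  ring

theorem sq_sub_self_eq_mul_of_isIdempotentElem (x : R) {c : R} (hc : IsIdempotentElem c) :
    x ^ 2 - x = (x - c) * (x + c - 1) := by
  linear_combination hc.eq

theorem Ideal.span_cube_sub_self_le_span_sq_sub_self (x : ι → R) (s : Set ι) :
    Ideal.span ((fun i => x i ^ 3 - x i) '' s) ≤ Ideal.span ((fun i => x i ^ 2 - x i) '' s) := by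
  rw [Ideal.span_le]
  rintro _ ⟨i, hi, rfl⟩
  change x i ^ 3 - x i ∈ _
  rw [pow_three_sub_self_eq_mul]
  exact Ideal.mul_mem_left _ _ (Ideal.subset_span ⟨i, hi, rfl⟩)

theorem Ideal.span_sq_sub_self_le_span_sub_of_isIdempotentElem (x c : ι → R) (s : Set ι)
    (hc : ∀ i ∈ s, IsIdempotentElem (c i)) :
    Ideal.span ((fun i => x i ^ 2 - x i) '' s) ≤ Ideal.span ((fun i => x i - c i) '' s) := by
  rw [Ideal.span_le]
  rintro _ ⟨i, hi, rfl⟩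
  change x i ^ 2 - x i ∈ _
  rw [sq_sub_self_eq_mul_of_isIdempotentElem (x i) (hc i hi)]
  exact Ideal.mul_mem_right _ _ (Ideal.subset_span ⟨i, hi, rfl⟩)

/-- Both sides equal `span G ⊔ span {xᵢ - cᵢ}`, since the cubic and the quadratic field
equations already lie in the ideal of the point. -/
theorem Ideal.span_union_cube_union_sub_eq_of_isIdempotentElem (G : Set R) (x c : ι → R)
    (s : Set ι) (hc : ∀ i ∈ s, IsIdempotentElem (c i)) :
    Ideal.span (G ∪ (fun i => x i ^ 3 - x i) '' s ∪ (fun i => x i - c i) '' s) =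
      Ideal.span (G ∪ (fun i => x i ^ 2 - x i) '' s) +
        Ideal.span ((fun i => x i - c i) '' s) := by
  have hsq := Ideal.span_sq_sub_self_le_span_sub_of_isIdempotentElem x c s hc
  have hcube := (Ideal.span_cube_sub_self_le_span_sq_sub_self x s).trans hsq
  simp only [Ideal.span_union, Ideal.add_eq_sup, sup_assoc, sup_eq_right.mpr hsq,
    sup_eq_right.mpr hcube]

end FieldEquations

/-- the ideal generated by `G`, the cubic field equations
`Xⱼ³ − Xⱼ` (`j ∈ s`) and the point equations `Xⱼ − aⱼ` (`j ∈ s`, with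
`aⱼ ∈ {0,1}`) equals the sum of the ideal generated by `G` together with the
quadratic field equations `Xⱼ² − Xⱼ` (`j ∈ s`) and the ideal generated by the
`Xⱼ − aⱼ`. -/
theorem span_union_cubic_point_eq_span_union_quadratic_add_span_point
    {σ : Type*} (s : Set σ) (G : Set (MvPolynomial σ (ZMod 3)))
    (a : σ → ZMod 3) (ha : ∀ j ∈ s, a j = 0 ∨ a j = 1) :
    Ideal.span (G ∪ ((fun j => X j ^ 3 - X j) '' s) ∪ ((fun j => X j - C (a j)) '' s)) =
      Ideal.span (G ∪ ((fun j => X j ^ 2 - X j) '' s)) +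
        Ideal.span ((fun j => X j - C (a j)) '' s) := by
  refine Ideal.span_union_cube_union_sub_eq_of_isIdempotentElem G X (fun j => C (a j)) s ?_
  intro j hj
  rcases ha j hj with h | h
  · rw [h, C_0]; exact .zero
  · rw [h, C_1]; exact .one
end
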